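/- arXiv:2512.23088 — 2 statements merged into one kernel-verified Lean document; each statement's English description precedes it below -/
import Mathlib

section
/- The proof system LocK45 is sound and complete with respect to the class H^{SU}_n of all simple and n-uniform hypergraph models: for every formula φ of the doxastic fragment L_B, LocK45 ⊢ φ if and only if M,e ⊨_h φ for every model M ∈ H^{SU}_n and every hyperedge e of M. -/
namespace DoxHG

/-- Formulas of the epistemic-doxastic language `L_KB`. -/
inductive Form (Ag Atom : Type) : Type
  | atom : Atom → Form Ag Atom
  | neg  : Form Ag Atom → Form Ag Atom
  | and  : Form Ag Atom → Form Ag Atom → Form Ag Atom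
  | B    : Ag → Form Ag Atom → Form Ag Atom
  | K    : Ag → Form Ag Atom → Form Ag Atom

namespace Form

variable {Ag Atom : Type}

/-- φ ∨ ψ := ¬(¬φ ∧ ¬ψ) -/
def or (φ ψ : Form Ag Atom) : Form Ag Atom := .neg (.and (.neg φ) (.neg ψ))

/-- φ → ψ := ¬φ ∨ ψ -/
def imp (φ ψ : Form Ag Atom) : Form Ag Atom := Form.or (.neg φ) ψ

/-- φ ↔ ψ -/
def biimp (φ ψ : Form Ag Atom) : Form Ag Atom := .and (φ.imp ψ) (ψ.imp φ)

/-- ⊥ := p ∧ ¬p for an arbitrary but fixed propositional variable p. -/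
def bot [Inhabited Atom] : Form Ag Atom := .and (.atom default) (.neg (.atom default))

/-- Membership in the doxastic fragment `L_B` (no knowledge operators). -/
def noK : Form Ag Atom → Prop
  | .atom _  => True
  | .neg φ   => φ.noK
  | .and φ ψ => φ.noK ∧ ψ.noK
  | .B _ φ   => φ.noK
  | .K _ _   => False

/-- φ is an `a`-formula: all variables are local variables of `a` (as given by
`owner`) and all modal operators are `B a` or `K a`. -/
def isAFormula (owner : Atom → Ag) (a : Ag) : Form Ag Atom → Prop
  | .atom p  => owner p = a
  | .neg φ   => φ.isAFormula owner a
  | .and φ ψ => φ.isAFormula owner a ∧ ψ.isAFormula owner a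
  | .B b φ   => b = a ∧ φ.isAFormula owner a
  | .K b φ   => b = a ∧ φ.isAFormula owner a

end Form

/-- φ is (an instance of) a classical propositional tautology: it evaluates to
true under every boolean valuation that respects negation and conjunction
(treating atoms and modal formulas as opaque). -/
def Tautology {Ag Atom : Type} (φ : Form Ag Atom) : Prop :=
  ∀ v : Form Ag Atom → Bool,
    (∀ ψ, v (.neg ψ) = !v ψ) →
    (∀ ψ χ, v (.and ψ χ) = (v ψ && v χ)) →
    v φ = true

/-! ### Doxastic Kripke models -/

/-- A doxastic Kripke model (with set of worlds the type `W`, assumed nonempty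
where required): doxastic accessibility relations `B a` and valuation `V`. -/
structure KModel (Ag Atom W : Type) where
  B : Ag → W → W → Prop
  V : W → Set Atom

section Kripke

variable {Ag Atom W : Type}

/-- Kripke satisfaction `⊨ₖ`; `K a` is interpreted via the equivalence relation
generated by `B a` (i.e. `Relation.EqvGen`, the smallest equivalence relation
containing it). -/
def ksat (M : KModel Ag Atom W) : W → Form Ag Atom → Prop
  | w, .atom p  => p ∈ M.V w
  | w, .neg φ   => ¬ ksat M w φ
  | w, .and φ ψ => ksat M w φ ∧ ksat M w ψ
  | w, .B a φ   => ∀ u, M.B a w u → ksat M u φ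
  | w, .K a φ   => ∀ u, Relation.EqvGen (M.B a) w u → ksat M u φ

def KModel.Serial (M : KModel Ag Atom W) : Prop := ∀ (a : Ag) (w : W), ∃ u, M.B a w u

def KModel.Transit (M : KModel Ag Atom W) : Prop :=
  ∀ (a : Ag) (u v w : W), M.B a u v → M.B a v w → M.B a u w

def KModel.Eucl (M : KModel Ag Atom W) : Prop :=
  ∀ (a : Ag) (u v w : W), M.B a u v → M.B a u w → M.B a v w

/-- Locality: worlds related by `B a ∪ (B a)⁻¹` agree on the local variables of `a`. -/
def KModel.Local (owner : Atom → Ag) (M : KModel Ag Atom W) : Prop :=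
  ∀ (a : Ag) (u v : W), (M.B a u v ∨ M.B a v u) →
    M.V u ∩ {p | owner p = a} = M.V v ∩ {p | owner p = a}

/-- Properness: distinct worlds are distinguished by some agent. -/
def KModel.Proper (M : KModel Ag Atom W) : Prop :=
  ∀ u v : W, u ≠ v → ∃ a : Ag, ¬ Relation.EqvGen (M.B a) u v

end Kripke

/-! ### The Hilbert systems EDL, LocK45 and LocKD45 -/

section ProofSystems

variable {Ag Atom : Type}

/-- Provability in the Hilbert system EDL. -/
inductive EDLProv (owner : Atom → Ag) : Form Ag Atom → Prop
  | taut {φ : Form Ag Atom} : Tautology φ → EDLProv owner φ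
  | axKB (a : Ag) (φ ψ : Form Ag Atom) :
      EDLProv owner ((Form.B a (φ.imp ψ)).imp ((Form.B a φ).imp (Form.B a ψ)))
  | axDB (a : Ag) (φ : Form Ag Atom) :
      EDLProv owner (Form.neg (Form.B a (Form.and φ (Form.neg φ))))
  | ax4B (a : Ag) (φ : Form Ag Atom) :
      EDLProv owner ((Form.B a φ).imp (Form.B a (Form.B a φ)))
  | ax5B (a : Ag) (φ : Form Ag Atom) :
      EDLProv owner ((Form.neg (Form.B a φ)).imp (Form.B a (Form.neg (Form.B a φ))))
  | axKK (a : Ag) (φ ψ : Form Ag Atom) :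
      EDLProv owner ((Form.K a (φ.imp ψ)).imp ((Form.K a φ).imp (Form.K a ψ)))
  | axTK (a : Ag) (φ : Form Ag Atom) :
      EDLProv owner ((Form.K a φ).imp φ)
  | ax4K (a : Ag) (φ : Form Ag Atom) :
      EDLProv owner ((Form.K a φ).imp (Form.K a (Form.K a φ)))
  | ax5K (a : Ag) (φ : Form Ag Atom) :
      EDLProv owner ((Form.neg (Form.K a φ)).imp (Form.K a (Form.neg (Form.K a φ))))
  | axPI (a : Ag) (φ : Form Ag Atom) :
      EDLProv owner ((Form.B a φ).imp (Form.K a (Form.B a φ)))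
  | axNI (a : Ag) (φ : Form Ag Atom) :
      EDLProv owner ((Form.neg (Form.B a φ)).imp (Form.K a (Form.neg (Form.B a φ))))
  | axKIB (a : Ag) (φ : Form Ag Atom) :
      EDLProv owner ((Form.K a φ).imp (Form.B a φ))
  | axLoc (a : Ag) (p : Atom) (h : owner p = a) :
      EDLProv owner (Form.and ((Form.atom p).imp (Form.B a (Form.atom p)))
        ((Form.neg (Form.atom p)).imp (Form.B a (Form.neg (Form.atom p)))))
  | mp {φ ψ : Form Ag Atom} :
      EDLProv owner (φ.imp ψ) → EDLProv owner φ → EDLProv owner ψ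
  | nec (a : Ag) {φ : Form Ag Atom} : EDLProv owner φ → EDLProv owner (Form.K a φ)

/-- Provability in the Hilbert systems over the doxastic fragment `L_B`:
`BProv owner true` is LocKD45 (with axiom D_B) and `BProv owner false` is
LocK45 (without D_B). -/
inductive BProv (owner : Atom → Ag) (withD : Bool) : Form Ag Atom → Prop
  | taut {φ : Form Ag Atom} : φ.noK → Tautology φ → BProv owner withD φ
  | axKB (a : Ag) {φ ψ : Form Ag Atom} (hφ : φ.noK) (hψ : ψ.noK) :
      BProv owner withD ((Form.B a (φ.imp ψ)).imp ((Form.B a φ).imp (Form.B a ψ)))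
  | axDB (a : Ag) {φ : Form Ag Atom} (hD : withD = true) (hφ : φ.noK) :
      BProv owner withD (Form.neg (Form.B a (Form.and φ (Form.neg φ))))
  | ax4B (a : Ag) {φ : Form Ag Atom} (hφ : φ.noK) :
      BProv owner withD ((Form.B a φ).imp (Form.B a (Form.B a φ)))
  | ax5B (a : Ag) {φ : Form Ag Atom} (hφ : φ.noK) :
      BProv owner withD ((Form.neg (Form.B a φ)).imp (Form.B a (Form.neg (Form.B a φ))))
  | axLoc (a : Ag) (p : Atom) (h : owner p = a) :
      BProv owner withD (Form.and ((Form.atom p).imp (Form.B a (Form.atom p)))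
        ((Form.neg (Form.atom p)).imp (Form.B a (Form.neg (Form.atom p)))))
  | mp {φ ψ : Form Ag Atom} :
      BProv owner withD (φ.imp ψ) → BProv owner withD φ → BProv owner withD ψ
  | nec (a : Ag) {φ : Form Ag Atom} : BProv owner withD φ → BProv owner withD (Form.B a φ)

/-- Conjunction of a finite list of formulas (the empty conjunction is ¬⊥). -/
def conj [Inhabited Atom] : List (Form Ag Atom) → Form Ag Atom
  | []        => Form.neg Form.bot
  | [φ]       => φ
  | φ :: rest => Form.and φ (conj rest)

/-- Γ ⊢ φ in EDL: some finite subset Δ ⊆ Γ has EDL ⊢ (⋀Δ) → φ. -/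
def ProvFrom [Inhabited Atom] (owner : Atom → Ag) (Γ : Set (Form Ag Atom))
    (φ : Form Ag Atom) : Prop :=
  ∃ L : List (Form Ag Atom), (∀ ψ ∈ L, ψ ∈ Γ) ∧ EDLProv owner ((conj L).imp φ)

/-- Γ is EDL-consistent. -/
def EDLConsistent [Inhabited Atom] (owner : Atom → Ag) (Γ : Set (Form Ag Atom)) : Prop :=
  ¬ ProvFrom owner Γ Form.bot

/-- Γ is maximally EDL-consistent. -/
def MaxEDLConsistent [Inhabited Atom] (owner : Atom → Ag) (Γ : Set (Form Ag Atom)) : Prop :=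
  EDLConsistent owner Γ ∧ ∀ Δ : Set (Form Ag Atom), Γ ⊂ Δ → ¬ EDLConsistent owner Δ

end ProofSystems

/-! ### Directed hypergraph models -/

/-- The undirected hyperedge `ē = T(e) ∪ H(e)` induced by a directed hyperedge
`e = (T(e), H(e))`. -/
def ebar {V : Type} (e : Set V × Set V) : Set V := e.1 ∪ e.2

/-- A (directed) hypergraph model: a vertex set, a set of directed hyperedges
(pairs (tail, head)), a coloring and a valuation.  Well-formedness conditions
are stated separately. -/
structure HModel (Ag Atom V : Type) where
  Vset : Set V
  E : Set (Set V × Set V)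
  χ : V → Ag
  ℓ : V → Set Atom

namespace HModel

variable {Ag Atom V : Type}

/-- `(Vset, E)` is a directed hypergraph: the vertex set is nonempty and every
hyperedge consists of a finite tail and a finite head, disjoint from each
other, both made of vertices. -/
def IsHypergraph (M : HModel Ag Atom V) : Prop :=
  M.Vset.Nonempty ∧
    ∀ e ∈ M.E, e.1 ⊆ M.Vset ∧ e.2 ⊆ M.Vset ∧ e.1.Finite ∧ e.2.Finite ∧ Disjoint e.1 e.2

/-- χ is a coloring: distinct vertices of the same hyperedge get distinct colors. -/
def IsChromatic (M : HModel Ag Atom V) : Prop :=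
  ∀ e ∈ M.E, Set.InjOn M.χ (ebar e)

/-- The valuation assigns to an `a`-colored vertex only local variables of `a`. -/
def ValOk (owner : Atom → Ag) (M : HModel Ag Atom V) : Prop :=
  ∀ v ∈ M.Vset, M.ℓ v ⊆ {p | owner p = M.χ v}

/-- M is a (well-formed, chromatic) hypergraph model. -/
def IsModel (owner : Atom → Ag) (M : HModel Ag Atom V) : Prop :=
  M.IsHypergraph ∧ M.IsChromatic ∧ M.ValOk owner

/-- Simplicity: for distinct hyperedges, `ē₁ ⊄ ē₂`. -/
def Simple (M : HModel Ag Atom V) : Prop :=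
  ∀ e₁ ∈ M.E, ∀ e₂ ∈ M.E, e₁ ≠ e₂ → ¬ ebar e₁ ⊆ ebar e₂

/-- n-uniformity: every hyperedge has exactly `n` vertices. -/
def Uniform (M : HModel Ag Atom V) (n : ℕ) : Prop :=
  ∀ e ∈ M.E, (ebar e).ncard = n

/-- Tail-completeness: every vertex lies in the tail of some hyperedge. -/
def TailComplete (M : HModel Ag Atom V) : Prop :=
  ∀ v ∈ M.Vset, ∃ e ∈ M.E, v ∈ e.1

end HModel

section HSemantics

variable {Ag Atom V : Type}

/-- The doxastic accessibility relation `B^G_a` between hyperedges: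
some `a`-colored vertex lies in `ē₁ ∩ T(e₂)`. -/
def Bacc (M : HModel Ag Atom V) (a : Ag) (e₁ e₂ : Set V × Set V) : Prop :=
  ∃ u : V, M.χ u = a ∧ u ∈ ebar e₁ ∧ u ∈ e₂.1

/-- The epistemic accessibility relation `K^G_a` between hyperedges:
some `a`-colored vertex lies in `ē₁ ∩ ē₂`. -/
def Kacc (M : HModel Ag Atom V) (a : Ag) (e₁ e₂ : Set V × Set V) : Prop :=
  ∃ u : V, M.χ u = a ∧ u ∈ ebar e₁ ∧ u ∈ ebar e₂

/-- `ℓ(e) = ⋃_{u ∈ ē} ℓ(u)`. -/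
def elabel (M : HModel Ag Atom V) (e : Set V × Set V) : Set Atom :=
  ⋃ u ∈ ebar e, M.ℓ u

/-- Hypergraph satisfaction `⊨ₕ`. -/
def hsat (M : HModel Ag Atom V) : Set V × Set V → Form Ag Atom → Prop
  | e, .atom p  => p ∈ elabel M e
  | e, .neg φ   => ¬ hsat M e φ
  | e, .and φ ψ => hsat M e φ ∧ hsat M e ψ
  | e, .B a φ   => ∀ e' ∈ M.E, Bacc M a e e' → hsat M e' φ
  | e, .K a φ   => ∀ e' ∈ M.E, Kacc M a e e' → hsat M e' φ

end HSemantics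

end DoxHG

namespace DoxHG

/-! ### Auxiliary development for statement 13 -/

section Aux

variable {Ag Atom : Type}

@[simp] lemma noK_atom (p : Atom) : (Form.atom p : Form Ag Atom).noK := trivial
@[simp] lemma noK_neg (φ : Form Ag Atom) : (Form.neg φ).noK ↔ φ.noK := Iff.rfl
@[simp] lemma noK_and (φ ψ : Form Ag Atom) : (Form.and φ ψ).noK ↔ φ.noK ∧ ψ.noK := Iff.rfl
@[simp] lemma noK_B (a : Ag) (φ : Form Ag Atom) : (Form.B a φ).noK ↔ φ.noK := Iff.rfl
@[simp] lemma noK_K (a : Ag) (φ : Form Ag Atom) : ¬ (Form.K a φ).noK := fun h => h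
@[simp] lemma noK_imp (φ ψ : Form Ag Atom) : (Form.imp φ ψ).noK ↔ φ.noK ∧ ψ.noK := by
  simp [Form.imp, Form.or, Form.noK]

/-- Auxiliary: value of an implication under a boolean valuation. -/
lemma v_imp {v : Form Ag Atom → Bool}
    (hn : ∀ ψ, v (.neg ψ) = !v ψ) (ha : ∀ ψ χ, v (.and ψ χ) = (v ψ && v χ))
    (α β : Form Ag Atom) : v (α.imp β) = (!v α || v β) := by
  simp only [Form.imp, Form.or, hn, ha]
  cases v α <;> cases v β <;> rfl

lemma taut_id (φ : Form Ag Atom) : Tautology (φ.imp φ) := by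
  intro v hn ha; rw [v_imp hn ha]; cases v φ <;> rfl

lemma taut_K1 (φ ψ : Form Ag Atom) : Tautology (φ.imp (ψ.imp φ)) := by
  intro v hn ha; simp only [v_imp hn ha]; cases v φ <;> cases v ψ <;> rfl

lemma taut_K2 (φ ψ χ : Form Ag Atom) :
    Tautology ((φ.imp (ψ.imp χ)).imp ((φ.imp ψ).imp (φ.imp χ))) := by
  intro v hn ha; simp only [v_imp hn ha]
  cases v φ <;> cases v ψ <;> cases v χ <;> rfl

lemma taut_swap (A c B h : Form Ag Atom) :
    Tautology ((A.imp (c.imp B)).imp ((h.imp A).imp (c.imp (h.imp B)))) := by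
  intro v hn ha; simp only [v_imp hn ha]
  cases v A <;> cases v c <;> cases v B <;> cases v h <;> rfl

lemma taut_comp (x y z w : Form Ag Atom) :
    Tautology ((x.imp (y.imp z)).imp ((z.imp w).imp (x.imp (y.imp w)))) := by
  intro v hn ha; simp only [v_imp hn ha]
  cases v x <;> cases v y <;> cases v z <;> cases v w <;> rfl

lemma taut_andE1 (φ ψ : Form Ag Atom) : Tautology ((Form.and φ ψ).imp φ) := by
  intro v hn ha; simp only [v_imp hn ha, ha]; cases v φ <;> cases v ψ <;> rfl

lemma taut_andE2 (φ ψ : Form Ag Atom) : Tautology ((Form.and φ ψ).imp ψ) := by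
  intro v hn ha; simp only [v_imp hn ha, ha]; cases v φ <;> cases v ψ <;> rfl

lemma taut_andI (φ ψ : Form Ag Atom) : Tautology (φ.imp (ψ.imp (Form.and φ ψ))) := by
  intro v hn ha; simp only [v_imp hn ha, ha]; cases v φ <;> cases v ψ <;> rfl

/-- The fixed contradiction built from an atom. -/
def btF (p0 : Atom) : Form Ag Atom := .and (.atom p0) (.neg (.atom p0))

@[simp] lemma noK_btF (p0 : Atom) : (btF p0 : Form Ag Atom).noK := by
  simp [btF, Form.noK]

lemma v_btF {v : Form Ag Atom → Bool}
    (hn : ∀ ψ, v (.neg ψ) = !v ψ) (ha : ∀ ψ χ, v (.and ψ χ) = (v ψ && v χ)) (p0 : Atom) :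
    v (btF p0) = false := by
  simp only [btF, ha, hn]; cases v (Form.atom p0) <;> rfl

lemma taut_negI (p0 : Atom) (ψ : Form Ag Atom) :
    Tautology ((ψ.imp (btF p0)).imp (Form.neg ψ)) := by
  intro v hn ha; simp only [v_imp hn ha, hn, v_btF hn ha]; cases v ψ <;> rfl

lemma taut_negE (p0 : Atom) (ψ : Form Ag Atom) :
    Tautology (ψ.imp ((Form.neg ψ).imp (btF p0))) := by
  intro v hn ha; simp only [v_imp hn ha, hn, v_btF hn ha]; cases v ψ <;> rfl

lemma taut_dne2 (p0 : Atom) (ψ : Form Ag Atom) :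
    Tautology (((Form.neg ψ).imp (btF p0)).imp ψ) := by
  intro v hn ha; simp only [v_imp hn ha, hn, v_btF hn ha]; cases v ψ <;> rfl

lemma BProv_noK {owner : Atom → Ag} {φ : Form Ag Atom} (h : BProv owner false φ) : φ.noK := by
  induction h <;> simp_all [Form.noK]

/-- Shorthand: tautology instances are provable. -/
lemma mkT {owner : Atom → Ag} {φ : Form Ag Atom} (h : Tautology φ) (hn : φ.noK) :
    BProv owner false φ := .taut hn h

/-- Provability from a set of assumptions. -/
inductive PF (owner : Atom → Ag) (Γ : Set (Form Ag Atom)) : Form Ag Atom → Prop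
  | ax {φ} : φ ∈ Γ → PF owner Γ φ
  | thm {φ} : BProv owner false φ → PF owner Γ φ
  | mp {φ ψ} : PF owner Γ (φ.imp ψ) → PF owner Γ φ → PF owner Γ ψ

lemma PF_noK {owner : Atom → Ag} {Γ : Set (Form Ag Atom)} {φ : Form Ag Atom}
    (hΓ : ∀ χ ∈ Γ, χ.noK) (h : PF owner Γ φ) : φ.noK := by
  induction h with
  | ax h => exact hΓ _ h
  | thm h => exact BProv_noK h
  | mp _ _ ih1 _ => exact ((noK_imp _ _).1 ih1).2

lemma PF_mono {owner : Atom → Ag} {Γ Δ : Set (Form Ag Atom)} {φ : Form Ag Atom}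
    (hsub : Γ ⊆ Δ) (h : PF owner Γ φ) : PF owner Δ φ := by
  induction h with
  | ax h => exact .ax (hsub h)
  | thm h => exact .thm h
  | mp _ _ ih1 ih2 => exact .mp ih1 ih2

lemma PF_deduction {owner : Atom → Ag} {Γ : Set (Form Ag Atom)} {φ ψ : Form Ag Atom}
    (hΓ : ∀ χ ∈ Γ, χ.noK) (hφ : φ.noK)
    (h : PF owner (insert φ Γ) ψ) : PF owner Γ (φ.imp ψ) := by
  have hins : ∀ χ ∈ insert φ Γ, χ.noK := by
    intro χ hχ; rcases hχ with rfl | h; exacts [hφ, hΓ _ h]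
  induction h with
  | ax h =>
    rcases h with rfl | h
    · exact .thm (mkT (taut_id _) (by simp [hφ]))
    · exact .mp (.thm (mkT (taut_K1 _ _) (by simp [hΓ _ h, hφ]))) (.ax h)
  | thm h => exact .mp (.thm (mkT (taut_K1 _ _) (by simp [BProv_noK h, hφ]))) (.thm h)
  | mp h1 h2 ih1 ih2 =>
    obtain ⟨n1, n2⟩ := (noK_imp _ _).1 (PF_noK hins h1)
    exact .mp (.mp (.thm (mkT (taut_K2 _ _ _) (by simp [hφ, n1, n2]))) ih1) ih2

lemma PF_fin {owner : Atom → Ag} {Γ : Set (Form Ag Atom)} {ψ : Form Ag Atom}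
    (h : PF owner Γ ψ) :
    ∃ L : List (Form Ag Atom), (∀ χ ∈ L, χ ∈ Γ) ∧ PF owner {χ | χ ∈ L} ψ := by
  induction h with
  | @ax φ h => exact ⟨[φ], by simpa using h, .ax (by simp)⟩
  | thm h => exact ⟨[], by simp, .thm h⟩
  | mp _ _ ih1 ih2 =>
    obtain ⟨L1, hL1, p1⟩ := ih1
    obtain ⟨L2, hL2, p2⟩ := ih2
    refine ⟨L1 ++ L2, ?_, .mp (PF_mono ?_ p1) (PF_mono ?_ p2)⟩
    · intro χ hχ
      rcases List.mem_append.1 hχ with h | h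
      exacts [hL1 _ h, hL2 _ h]
    · intro x hx; simp only [Set.mem_setOf_eq, List.mem_append] at *; exact Or.inl hx
    · intro x hx; simp only [Set.mem_setOf_eq, List.mem_append] at *; exact Or.inr hx

lemma PF_empty {owner : Atom → Ag} {ψ : Form Ag Atom}
    (h : PF owner (∅ : Set (Form Ag Atom)) ψ) : BProv owner false ψ := by
  induction h with
  | ax h => exact absurd h (Set.notMem_empty _)
  | thm h => exact h
  | mp _ _ ih1 ih2 => exact .mp ih1 ih2

/-- Iterated implication over a list of hypotheses. -/
def impList (L : List (Form Ag Atom)) (φ : Form Ag Atom) : Form Ag Atom :=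
  L.foldr Form.imp φ

@[simp] lemma impList_nil (φ : Form Ag Atom) : impList [] φ = φ := rfl
@[simp] lemma impList_cons (χ : Form Ag Atom) (L : List (Form Ag Atom)) (φ : Form Ag Atom) :
    impList (χ :: L) φ = χ.imp (impList L φ) := rfl

lemma noK_impList {L : List (Form Ag Atom)} {φ : Form Ag Atom}
    (hL : ∀ χ ∈ L, χ.noK) (hφ : φ.noK) : (impList L φ).noK := by
  induction L with
  | nil => simpa using hφ
  | cons χ L ih =>
    simp only [impList_cons, noK_imp]
    exact ⟨hL _ (by simp), ih (fun χ hχ => hL _ (by simp [hχ]))⟩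

lemma P_swap {owner : Atom → Ag} {L : List (Form Ag Atom)} {a ψ : Form Ag Atom}
    (hL : ∀ χ ∈ L, χ.noK) (ha : a.noK) (hψ : ψ.noK) :
    BProv owner false ((impList L (a.imp ψ)).imp (a.imp (impList L ψ))) := by
  induction L with
  | nil => exact mkT (taut_id _) (by simp [ha, hψ])
  | cons h L ih =>
    have hh : h.noK := hL _ (by simp)
    have hL' : ∀ χ ∈ L, χ.noK := fun χ hχ => hL _ (by simp [hχ])
    have hA : (impList L (a.imp ψ)).noK := noK_impList hL' (by simp [ha, hψ])
    have hB : (impList L ψ).noK := noK_impList hL' hψ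
    exact .mp (mkT (taut_swap (impList L (a.imp ψ)) a (impList L ψ) h)
      (by simp [hA, hB, ha, hh])) (ih hL')

lemma PF_impList {owner : Atom → Ag} {L : List (Form Ag Atom)} {ψ : Form Ag Atom}
    (hL : ∀ χ ∈ L, χ.noK) (hψ : ψ.noK) (h : PF owner {χ | χ ∈ L} ψ) :
    BProv owner false (impList L ψ) := by
  induction L generalizing ψ with
  | nil =>
    refine PF_empty (PF_mono ?_ h)
    intro x hx; simp only [Set.mem_setOf_eq, List.not_mem_nil] at hx
  | cons a L ih =>
    have ha : a.noK := hL _ (by simp)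
    have hL' : ∀ χ ∈ L, χ.noK := fun χ hχ => hL _ (by simp [hχ])
    have h1 : PF owner (insert a {χ | χ ∈ L}) ψ := by
      refine PF_mono ?_ h
      intro x hx
      simp only [Set.mem_setOf_eq, List.mem_cons] at hx
      rcases hx with rfl | hx
      · exact Set.mem_insert _ _
      · exact Set.mem_insert_of_mem _ hx
    have h2 : PF owner {χ | χ ∈ L} (a.imp ψ) := PF_deduction (fun χ hχ => hL' χ hχ) ha h1
    have h3 := ih hL' (by simp [ha, hψ]) h2
    exact .mp (P_swap hL' ha hψ) h3

lemma PF_impList_elim {owner : Atom → Ag} {Γ : Set (Form Ag Atom)} :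
    ∀ {L : List (Form Ag Atom)} {θ : Form Ag Atom},
      PF owner Γ (impList L θ) → (∀ χ ∈ L, χ ∈ Γ) → PF owner Γ θ := by
  intro L
  induction L with
  | nil => exact fun h _ => h
  | cons x L ih =>
    intro θ h hmem
    exact ih (.mp h (.ax (hmem _ (by simp)))) (fun χ hχ => hmem _ (by simp [hχ]))

lemma P_Kdist {owner : Atom → Ag} (b : Ag) {L : List (Form Ag Atom)} {ψ : Form Ag Atom}
    (hL : ∀ χ ∈ L, χ.noK) (hψ : ψ.noK) :
    BProv owner false ((Form.B b (impList L ψ)).imp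
      (impList (L.map (Form.B b)) (Form.B b ψ))) := by
  induction L with
  | nil => exact mkT (taut_id _) (by simp [hψ])
  | cons χ L ih =>
    have hχ : χ.noK := hL _ (by simp)
    have hL' : ∀ χ ∈ L, χ.noK := fun χ hχ => hL _ (by simp [hχ])
    have hR : (impList L ψ).noK := noK_impList hL' hψ
    have hM : (impList (L.map (Form.B b)) (Form.B b ψ)).noK := by
      refine noK_impList ?_ (by simp [hψ])
      intro x hx
      obtain ⟨y, hy, rfl⟩ := List.mem_map.1 hx
      simp [hL' _ hy]
    have hKB := BProv.axKB (owner := owner) (withD := false) b hχ hR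
    exact .mp (.mp (mkT (taut_comp (Form.B b (χ.imp (impList L ψ))) (Form.B b χ)
      (Form.B b (impList L ψ)) (impList (L.map (Form.B b)) (Form.B b ψ)))
      (by simp [hχ, hR, hM, hψ])) hKB) (ih hL')

end Aux

section MCS

variable {Ag Atom : Type}

/-- Consistency (of a set of `noK` formulas). -/
def Con (owner : Atom → Ag) (p0 : Atom) (Γ : Set (Form Ag Atom)) : Prop :=
  (∀ ψ ∈ Γ, ψ.noK) ∧ ¬ PF owner Γ (btF p0)

/-- Maximal consistency. -/
def MCS (owner : Atom → Ag) (p0 : Atom) (Γ : Set (Form Ag Atom)) : Prop :=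
  Con owner p0 Γ ∧ ∀ ψ, ψ.noK → ψ ∉ Γ → ¬ Con owner p0 (insert ψ Γ)

variable {owner : Atom → Ag} {p0 : Atom} {Γ Δ : Set (Form Ag Atom)}

lemma MCS.noK (h : MCS owner p0 Γ) : ∀ ψ ∈ Γ, ψ.noK := h.1.1

lemma MCS.closed (h : MCS owner p0 Γ) {ψ : Form Ag Atom} (hψ : ψ.noK)
    (hp : PF owner Γ ψ) : ψ ∈ Γ := by
  by_contra hmem
  refine h.2 ψ hψ hmem ⟨?_, ?_⟩
  · intro χ hχ; rcases hχ with rfl | hχ; exacts [hψ, h.noK _ hχ]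
  · intro hPF
    have hd := PF_deduction h.noK hψ hPF
    exact h.1.2 (.mp hd hp)

lemma MCS.thm (h : MCS owner p0 Γ) {ψ : Form Ag Atom} (hp : BProv owner false ψ) : ψ ∈ Γ :=
  h.closed (BProv_noK hp) (.thm hp)

lemma MCS.mem_imp (h : MCS owner p0 Γ) {φ ψ : Form Ag Atom}
    (h1 : φ.imp ψ ∈ Γ) (h2 : φ ∈ Γ) : ψ ∈ Γ :=
  h.closed ((noK_imp _ _).1 (h.noK _ h1)).2 (.mp (.ax h1) (.ax h2))

lemma MCS.neg_intro (h : MCS owner p0 Γ) {ψ : Form Ag Atom} (hψ : ψ.noK)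
    (hmem : ψ ∉ Γ) : Form.neg ψ ∈ Γ := by
  have hni := h.2 ψ hψ hmem
  have hPF : PF owner (insert ψ Γ) (btF p0) := by
    by_contra hc
    exact hni ⟨fun χ hχ => by rcases hχ with rfl | hχ; exacts [hψ, h.noK _ hχ], hc⟩
  have hd := PF_deduction h.noK hψ hPF
  refine h.closed (by simp [hψ]) (.mp (.thm (mkT (taut_negI p0 ψ) ?_)) hd)
  simp [hψ]

lemma MCS.not_both (h : MCS owner p0 Γ) {ψ : Form Ag Atom}
    (h1 : ψ ∈ Γ) (h2 : Form.neg ψ ∈ Γ) : False := by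
  have hψ : ψ.noK := h.noK _ h1
  refine h.1.2 (.mp (.mp (.thm (mkT (taut_negE p0 ψ) ?_)) (.ax h1)) (.ax h2))
  simp [hψ]

lemma MCS.neg_iff (h : MCS owner p0 Γ) {ψ : Form Ag Atom} (hψ : ψ.noK) :
    Form.neg ψ ∈ Γ ↔ ψ ∉ Γ :=
  ⟨fun hn hm => h.not_both hm hn, h.neg_intro hψ⟩

lemma MCS.and_iff (h : MCS owner p0 Γ) {φ ψ : Form Ag Atom} (hφ : φ.noK) (hψ : ψ.noK) :
    Form.and φ ψ ∈ Γ ↔ φ ∈ Γ ∧ ψ ∈ Γ := by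
  constructor
  · intro hm
    exact ⟨h.mem_imp (h.thm (mkT (taut_andE1 φ ψ) (by simp [hφ, hψ]))) hm,
      h.mem_imp (h.thm (mkT (taut_andE2 φ ψ) (by simp [hφ, hψ]))) hm⟩
  · rintro ⟨h1, h2⟩
    exact h.mem_imp (h.mem_imp (h.thm (mkT (taut_andI φ ψ) (by simp [hφ, hψ]))) h1) h2

lemma chain_list {c : Set (Set (Form Ag Atom))} (hchain : IsChain (· ⊆ ·) c)
    (hne : c.Nonempty) :
    ∀ L : List (Form Ag Atom), (∀ x ∈ L, x ∈ ⋃₀ c) → ∃ t ∈ c, ∀ x ∈ L, x ∈ t := by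
  intro L
  induction L with
  | nil => exact fun _ => ⟨hne.choose, hne.choose_spec, by simp⟩
  | cons a L ih =>
    intro hmem
    obtain ⟨t, htc, htL⟩ := ih (fun x hx => hmem _ (by simp [hx]))
    obtain ⟨s, hsc, has⟩ := hmem a (by simp)
    by_cases hts : t = s
    · subst hts
      refine ⟨t, htc, ?_⟩
      intro x hx
      rcases List.mem_cons.1 hx with rfl | hx
      exacts [has, htL _ hx]
    · rcases hchain htc hsc hts with hsub | hsub
      · refine ⟨s, hsc, ?_⟩
        intro x hx
        rcases List.mem_cons.1 hx with rfl | hx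
        exacts [has, hsub (htL _ hx)]
      · refine ⟨t, htc, ?_⟩
        intro x hx
        rcases List.mem_cons.1 hx with rfl | hx
        exacts [hsub has, htL _ hx]

lemma lindenbaum (h : Con owner p0 Γ) : ∃ Δ, Γ ⊆ Δ ∧ MCS owner p0 Δ := by
  have hz : ∀ c ⊆ {Δ : Set (Form Ag Atom) | Con owner p0 Δ}, IsChain (· ⊆ ·) c →
      c.Nonempty → ∃ ub ∈ {Δ | Con owner p0 Δ}, ∀ s ∈ c, s ⊆ ub := by
    intro c hc hchain hne
    refine ⟨⋃₀ c, ⟨?_, ?_⟩, fun s hs => Set.subset_sUnion_of_mem hs⟩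
    · rintro ψ ⟨t, htc, hψt⟩
      exact (hc htc).1 _ hψt
    · intro hPF
      obtain ⟨L, hL, hPF'⟩ := PF_fin hPF
      obtain ⟨t, htc, htL⟩ := chain_list hchain hne L hL
      exact (hc htc).2 (PF_mono (fun x hx => htL x hx) hPF')
  obtain ⟨Δ, hsub, hmax⟩ := zorn_subset_nonempty {Δ | Con owner p0 Δ} hz Γ h
  refine ⟨Δ, hsub, hmax.prop, ?_⟩
  intro ψ hψ hmem hcon
  exact hmem (hmax.2 hcon (Set.subset_insert _ _) (Set.mem_insert _ _))

end MCS

section Semantics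

variable {Ag Atom V : Type}

@[simp] lemma hsat_atom (M : HModel Ag Atom V) (e : Set V × Set V) (p : Atom) :
    hsat M e (.atom p) ↔ p ∈ elabel M e := Iff.rfl

@[simp] lemma hsat_neg (M : HModel Ag Atom V) (e : Set V × Set V) (φ : Form Ag Atom) :
    hsat M e (.neg φ) ↔ ¬ hsat M e φ := Iff.rfl

@[simp] lemma hsat_and (M : HModel Ag Atom V) (e : Set V × Set V) (φ ψ : Form Ag Atom) :
    hsat M e (.and φ ψ) ↔ hsat M e φ ∧ hsat M e ψ := Iff.rfl

@[simp] lemma hsat_B (M : HModel Ag Atom V) (e : Set V × Set V) (a : Ag) (φ : Form Ag Atom) :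
    hsat M e (.B a φ) ↔ ∀ e' ∈ M.E, Bacc M a e e' → hsat M e' φ := Iff.rfl

lemma hsat_imp (M : HModel Ag Atom V) (e : Set V × Set V) (φ ψ : Form Ag Atom) :
    hsat M e (φ.imp ψ) ↔ (hsat M e φ → hsat M e ψ) := by
  simp only [Form.imp, Form.or, hsat_neg, hsat_and]
  tauto

lemma mem_elabel {M : HModel Ag Atom V} {e : Set V × Set V} {p : Atom} :
    p ∈ elabel M e ↔ ∃ u ∈ ebar e, p ∈ M.ℓ u := by
  simp [elabel]

lemma mem_ebar_tail {e : Set V × Set V} {u : V} (h : u ∈ e.1) : u ∈ ebar e :=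
  Set.mem_union_left _ h

lemma soundness {owner : Atom → Ag} {φ : Form Ag Atom} (h : BProv owner false φ)
    (V : Type) (M : HModel Ag Atom V) (hM : M.IsModel owner) :
    ∀ e ∈ M.E, hsat M e φ := by
  obtain ⟨hHG, hChr, hVal⟩ := hM
  induction h with
  | @taut ψ hn ht =>
    intro e he
    classical
    set v : Form Ag Atom → Bool := fun χ => if hsat M e χ then true else false with hv
    have hneg : ∀ χ, v (.neg χ) = !v χ := by
      intro χ
      by_cases h : hsat M e χ
      · have h' : hsat M e (.neg χ) ↔ ¬ hsat M e χ := Iff.rfl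
        simp [hv, h, h']
      · have h' : hsat M e (.neg χ) ↔ ¬ hsat M e χ := Iff.rfl
        simp [hv, h, h']
    have hand : ∀ χ₁ χ₂, v (.and χ₁ χ₂) = (v χ₁ && v χ₂) := by
      intro χ₁ χ₂
      have h' : hsat M e (.and χ₁ χ₂) ↔ hsat M e χ₁ ∧ hsat M e χ₂ := Iff.rfl
      by_cases h1 : hsat M e χ₁ <;> by_cases h2 : hsat M e χ₂ <;> simp [hv, h1, h2, h']
    have := ht v hneg hand
    by_contra hcon
    simp [hv, hcon] at this
  | @axKB a ψ χ hψ hχ =>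
    intro e he
    simp only [hsat_imp, hsat_B]
    intro h1 h2 e' he' hacc
    exact h1 e' he' hacc (h2 e' he' hacc)
  | axDB a hD hφ => exact absurd hD (by simp)
  | @ax4B a ψ hψ =>
    intro e he
    simp only [hsat_imp, hsat_B]
    intro h e1 he1 h1 e2 he2 h2
    obtain ⟨u, hu, hu1, hu2⟩ := h1
    obtain ⟨w, hw, hw1, hw2⟩ := h2
    have huw : u = w := hChr e1 he1 (mem_ebar_tail hu2) hw1 (hu.trans hw.symm)
    exact h e2 he2 ⟨u, hu, hu1, huw ▸ hw2⟩
  | @ax5B a ψ hψ =>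
    intro e he
    simp only [hsat_imp, hsat_neg, hsat_B]
    intro h e1 he1 hacc1 hall
    apply h
    intro e2 he2 hacc2
    obtain ⟨u, hu, hu1, hu2⟩ := hacc1
    obtain ⟨w, hw, hw1, hw2⟩ := hacc2
    have huw : u = w := hChr e he hu1 hw1 (hu.trans hw.symm)
    exact hall e2 he2 ⟨u, hu, mem_ebar_tail hu2, huw ▸ hw2⟩
  | @axLoc a p hp =>
    intro e he
    simp only [hsat_and, hsat_imp, hsat_neg, hsat_atom, hsat_B]
    constructor
    · intro hpe e' he' hacc
      obtain ⟨w, hw, hw1, hw2⟩ := hacc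
      obtain ⟨u, hu, hpu⟩ := mem_elabel.1 hpe
      have huV : u ∈ M.Vset := by
        rcases hu with hu | hu
        exacts [(hHG.2 e he).1 hu, (hHG.2 e he).2.1 hu]
      have hχu : M.χ u = a := by
        have := hVal u huV hpu
        simp only [Set.mem_setOf_eq] at this
        rw [← this, hp]
      have huw : u = w := hChr e he hu hw1 (hχu.trans hw.symm)
      exact mem_elabel.2 ⟨u, huw ▸ mem_ebar_tail hw2, hpu⟩
    · intro hnpe e' he' hacc hpe'
      apply hnpe
      obtain ⟨w, hw, hw1, hw2⟩ := hacc
      obtain ⟨u, hu, hpu⟩ := mem_elabel.1 hpe'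
      have huV : u ∈ M.Vset := by
        rcases hu with hu | hu
        exacts [(hHG.2 e' he').1 hu, (hHG.2 e' he').2.1 hu]
      have hχu : M.χ u = a := by
        have := hVal u huV hpu
        simp only [Set.mem_setOf_eq] at this
        rw [← this, hp]
      have huw : u = w := hChr e' he' hu (mem_ebar_tail hw2) (hχu.trans hw.symm)
      exact mem_elabel.2 ⟨u, huw ▸ hw1, hpu⟩
  | mp h1 h2 ih1 ih2 =>
    intro e he
    exact (hsat_imp M e _ _).1 (ih1 e he) (ih2 e he)
  | nec a h ih =>
    intro e he e' he' _
    exact ih e' he'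

end Semantics

section Canonical

variable {Ag Atom : Type}

/-- The vertex representing agent `a`'s local state in the world `Γ`. -/
def vertC (owner : Atom → Ag) (Γ : Set (Form Ag Atom)) (a : Ag) :
    Ag × Set (Form Ag Atom) × Set Atom :=
  (a, {ψ | Form.B a ψ ∈ Γ}, {p | Form.atom p ∈ Γ ∧ owner p = a})

/-- Agent `a`'s beliefs are correct at `Γ`. -/
def okA (Γ : Set (Form Ag Atom)) (a : Ag) : Prop := ∀ ψ, Form.B a ψ ∈ Γ → ψ ∈ Γ

/-- The hyperedge corresponding to a world `Γ`. -/
def edgeC (owner : Atom → Ag) (Γ : Set (Form Ag Atom)) :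
    Set (Ag × Set (Form Ag Atom) × Set Atom) × Set (Ag × Set (Form Ag Atom) × Set Atom) :=
  ({v | ∃ a, okA Γ a ∧ v = vertC owner Γ a}, {v | ∃ a, ¬ okA Γ a ∧ v = vertC owner Γ a})

/-- The canonical hypergraph model. -/
def canM (owner : Atom → Ag) (p0 : Atom) :
    HModel Ag Atom (Ag × Set (Form Ag Atom) × Set Atom) where
  Vset := {v | ∃ Γ, MCS owner p0 Γ ∧ ∃ a, v = vertC owner Γ a}
  E := {e | ∃ Γ, MCS owner p0 Γ ∧ e = edgeC owner Γ}
  χ := fun v => v.1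
  ℓ := fun v => v.2.2

variable {owner : Atom → Ag} {p0 : Atom} {Γ Δ : Set (Form Ag Atom)}

lemma vertC_inj (Γ : Set (Form Ag Atom)) : Function.Injective (vertC owner Γ) :=
  fun a b h => congrArg Prod.fst h

lemma ebar_edgeC : ebar (edgeC owner Γ) = Set.range (vertC owner Γ) := by
  ext v
  simp only [ebar, edgeC, Set.mem_union, Set.mem_setOf_eq, Set.mem_range]
  constructor
  · rintro (⟨a, _, rfl⟩ | ⟨a, _, rfl⟩) <;> exact ⟨a, rfl⟩
  · rintro ⟨a, rfl⟩
    by_cases h : okA Γ a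
    exacts [Or.inl ⟨a, h, rfl⟩, Or.inr ⟨a, h, rfl⟩]

lemma mem_ebar_edgeC {u : Ag × Set (Form Ag Atom) × Set Atom} :
    u ∈ ebar (edgeC owner Γ) ↔ ∃ a, u = vertC owner Γ a := by
  rw [ebar_edgeC]
  exact ⟨fun ⟨a, h⟩ => ⟨a, h.symm⟩, fun ⟨a, h⟩ => ⟨a, h.symm⟩⟩

lemma mem_ebar_color {u : Ag × Set (Form Ag Atom) × Set Atom} {a : Ag}
    (h : u ∈ ebar (edgeC owner Γ)) (ha : u.1 = a) : u = vertC owner Γ a := by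
  obtain ⟨b, rfl⟩ := mem_ebar_edgeC.1 h
  have : b = a := ha
  rw [this]

/-- Transfer of `B a`-formulas along the canonical relation. -/
lemma bset_transfer (hΓ : MCS owner p0 Γ) (hΔ : MCS owner p0 Δ) {a : Ag}
    (R : ∀ ψ, Form.B a ψ ∈ Γ → ψ ∈ Δ) :
    ∀ ψ, Form.B a ψ ∈ Γ ↔ Form.B a ψ ∈ Δ := by
  intro ψ
  constructor
  · intro h
    have hψ : ψ.noK := by simpa using hΓ.noK _ h
    exact R _ (hΓ.mem_imp (hΓ.thm (BProv.ax4B a hψ)) h)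
  · intro h
    by_contra hn
    have hψ : ψ.noK := by simpa using hΔ.noK _ h
    have h1 : Form.neg (Form.B a ψ) ∈ Γ := hΓ.neg_intro (by simp [hψ]) hn
    have h2 : Form.B a (Form.neg (Form.B a ψ)) ∈ Γ :=
      hΓ.mem_imp (hΓ.thm (BProv.ax5B a hψ)) h1
    exact hΔ.not_both h (R _ h2)

lemma atom_transfer (hΓ : MCS owner p0 Γ) (hΔ : MCS owner p0 Δ) {a : Ag}
    (R : ∀ ψ, Form.B a ψ ∈ Γ → ψ ∈ Δ) {p : Atom} (hp : owner p = a) :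
    (Form.atom p ∈ Γ ↔ Form.atom p ∈ Δ) := by
  have hloc := hΓ.thm (BProv.axLoc (owner := owner) (withD := false) a p hp)
  obtain ⟨hl1, hl2⟩ := (hΓ.and_iff (by simp) (by simp)).1 hloc
  constructor
  · intro h
    exact R _ (hΓ.mem_imp hl1 h)
  · intro h
    by_contra hn
    have h1 : Form.neg (Form.atom p) ∈ Γ := hΓ.neg_intro (by simp) hn
    have h2 : Form.B a (Form.neg (Form.atom p)) ∈ Γ := hΓ.mem_imp hl2 h1
    exact hΔ.not_both h (R _ h2)

lemma vertC_eq_of_R (hΓ : MCS owner p0 Γ) (hΔ : MCS owner p0 Δ) {a : Ag}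
    (R : ∀ ψ, Form.B a ψ ∈ Γ → ψ ∈ Δ) : vertC owner Γ a = vertC owner Δ a := by
  unfold vertC
  refine Prod.ext rfl (Prod.ext ?_ ?_)
  · ext ψ
    simp only [Set.mem_setOf_eq]
    exact bset_transfer hΓ hΔ R ψ
  · ext p
    simp only [Set.mem_setOf_eq]
    constructor
    · rintro ⟨h, hp⟩
      exact ⟨(atom_transfer hΓ hΔ R hp).1 h, hp⟩
    · rintro ⟨h, hp⟩
      exact ⟨(atom_transfer hΓ hΔ R hp).2 h, hp⟩

lemma Bacc_edgeC_iff (hΓ : MCS owner p0 Γ) (hΔ : MCS owner p0 Δ) {a : Ag} :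
    Bacc (canM owner p0) a (edgeC owner Γ) (edgeC owner Δ) ↔
      ∀ ψ, Form.B a ψ ∈ Γ → ψ ∈ Δ := by
  constructor
  · rintro ⟨u, hχ, hu1, hu2⟩
    have huΓ : u = vertC owner Γ a := mem_ebar_color hu1 hχ
    obtain ⟨b, hok, hub⟩ := hu2
    have hba : b = a := by rw [hub] at hχ; exact hχ
    rw [hba] at hub hok
    have hvv : vertC owner Γ a = vertC owner Δ a := huΓ.symm.trans hub
    have hsets : {ψ | Form.B a ψ ∈ Γ} = {ψ | Form.B a ψ ∈ Δ} :=
      congrArg (fun x => x.2.1) hvv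
    intro ψ h
    have : Form.B a ψ ∈ Δ := by
      have := Set.ext_iff.1 hsets ψ
      simpa using this.1 h
    exact hok ψ this
  · intro R
    have hvv := vertC_eq_of_R hΓ hΔ R
    refine ⟨vertC owner Γ a, rfl, ?_, ?_⟩
    · rw [ebar_edgeC]; exact ⟨a, rfl⟩
    · refine ⟨a, ?_, hvv⟩
      intro ψ h
      have : Form.B a ψ ∈ Γ := (bset_transfer hΓ hΔ R ψ).2 h
      exact R _ this

/-- Maximal consistent sets agreeing on atoms and belief formulas are equal. -/
lemma mcs_ext (hΓ : MCS owner p0 Γ) (hΔ : MCS owner p0 Δ)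
    (hB : ∀ (a : Ag) (ψ : Form Ag Atom), Form.B a ψ ∈ Γ ↔ Form.B a ψ ∈ Δ)
    (hA : ∀ p : Atom, Form.atom p ∈ Γ ↔ Form.atom p ∈ Δ) : Γ = Δ := by
  ext χ
  induction χ with
  | atom p => exact hA p
  | neg ψ ih =>
    by_cases hn : ψ.noK
    · rw [hΓ.neg_iff hn, hΔ.neg_iff hn, ih]
    · refine iff_of_false (fun h => hn ?_) (fun h => hn ?_)
      · simpa using hΓ.noK _ h
      · simpa using hΔ.noK _ h
  | and ψ χ ih1 ih2 =>
    by_cases hn : (Form.and ψ χ).noK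
    · obtain ⟨h1, h2⟩ := (noK_and ψ χ).1 hn
      rw [hΓ.and_iff h1 h2, hΔ.and_iff h1 h2, ih1, ih2]
    · exact iff_of_false (fun h => hn (hΓ.noK _ h)) (fun h => hn (hΔ.noK _ h))
  | B a ψ ih => exact hB a ψ
  | K a ψ ih =>
    exact iff_of_false (fun h => noK_K a ψ (hΓ.noK _ h)) (fun h => noK_K a ψ (hΔ.noK _ h))

lemma edgeC_inj (hΓ : MCS owner p0 Γ) (hΔ : MCS owner p0 Δ)
    (hsub : ebar (edgeC owner Γ) ⊆ ebar (edgeC owner Δ)) : Γ = Δ := by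
  have hvv : ∀ a, vertC owner Γ a = vertC owner Δ a := by
    intro a
    have h1 : vertC owner Γ a ∈ ebar (edgeC owner Δ) := hsub (by rw [ebar_edgeC]; exact ⟨a, rfl⟩)
    exact mem_ebar_color h1 rfl
  refine mcs_ext hΓ hΔ ?_ ?_
  · intro a ψ
    have := congrArg (fun x => x.2.1) (hvv a)
    have h2 := Set.ext_iff.1 this ψ
    simpa [vertC] using h2
  · intro p
    have := congrArg (fun x => x.2.2) (hvv (owner p))
    have h2 := Set.ext_iff.1 this p
    simp only [vertC, Set.mem_setOf_eq, and_true] at h2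
    exact h2

end Canonical

section TruthLemma

variable {Ag Atom : Type}

variable {owner : Atom → Ag} {p0 : Atom}

lemma mem_E_canM {e} :
    e ∈ (canM owner p0).E ↔ ∃ Γ, MCS owner p0 Γ ∧ e = edgeC owner Γ := Iff.rfl

lemma canM_isModel [Nonempty Ag] (hex : ∃ Γ, MCS owner p0 Γ) [Fintype Ag] :
    (canM owner p0).IsModel owner := by
  obtain ⟨Γ0, hΓ0⟩ := hex
  refine ⟨⟨⟨vertC owner Γ0 (Classical.arbitrary Ag), Γ0, hΓ0, _, rfl⟩, ?_⟩, ?_, ?_⟩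
  · rintro e ⟨Γ, hΓ, rfl⟩
    refine ⟨?_, ?_, ?_, ?_, ?_⟩
    · rintro v ⟨a, _, rfl⟩; exact ⟨Γ, hΓ, a, rfl⟩
    · rintro v ⟨a, _, rfl⟩; exact ⟨Γ, hΓ, a, rfl⟩
    · refine (Set.finite_range (vertC owner Γ)).subset ?_
      rintro v ⟨a, _, rfl⟩; exact ⟨a, rfl⟩
    · refine (Set.finite_range (vertC owner Γ)).subset ?_
      rintro v ⟨a, _, rfl⟩; exact ⟨a, rfl⟩
    · rw [Set.disjoint_left]
      rintro v ⟨a, ha, rfl⟩ ⟨b, hb, hab⟩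
      have : a = b := congrArg Prod.fst hab
      rw [← this] at hb
      exact hb ha
  · rintro e ⟨Γ, hΓ, rfl⟩
    intro u hu w hw huw
    obtain ⟨a, rfl⟩ := mem_ebar_edgeC.1 hu
    obtain ⟨b, rfl⟩ := mem_ebar_edgeC.1 hw
    have : a = b := huw
    rw [this]
  · rintro v ⟨Γ, hΓ, a, rfl⟩
    intro p hp
    exact hp.2

lemma canM_simple : (canM owner p0).Simple := by
  rintro e1 ⟨Γ, hΓ, rfl⟩ e2 ⟨Δ, hΔ, rfl⟩ hne hsub
  exact hne (by rw [edgeC_inj hΓ hΔ hsub])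

lemma canM_uniform [Fintype Ag] : (canM owner p0).Uniform (Fintype.card Ag) := by
  rintro e ⟨Γ, hΓ, rfl⟩
  rw [ebar_edgeC, ← Set.image_univ, Set.ncard_image_of_injective _ (vertC_inj Γ),
    Set.ncard_univ, Nat.card_eq_fintype_card]

lemma truth_lemma :
    ∀ ψ : Form Ag Atom, ψ.noK → ∀ Γ, MCS owner p0 Γ →
      (hsat (canM owner p0) (edgeC owner Γ) ψ ↔ ψ ∈ Γ) := by
  intro ψ
  induction ψ with
  | atom p =>
    intro _ Γ hΓ
    simp only [hsat_atom]
    constructor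
    · intro h
      obtain ⟨u, hu, hpu⟩ := mem_elabel.1 h
      obtain ⟨a, rfl⟩ := mem_ebar_edgeC.1 hu
      exact hpu.1
    · intro h
      refine mem_elabel.2 ⟨vertC owner Γ (owner p), mem_ebar_edgeC.2 ⟨owner p, rfl⟩, h, rfl⟩
  | neg ψ ih =>
    intro hn Γ hΓ
    have hψ : ψ.noK := hn
    rw [hsat_neg, ih hψ Γ hΓ, ← hΓ.neg_iff hψ]
  | and ψ χ ih1 ih2 =>
    intro hn Γ hΓ
    obtain ⟨h1, h2⟩ := (noK_and ψ χ).1 hn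
    rw [hsat_and, ih1 h1 Γ hΓ, ih2 h2 Γ hΓ, hΓ.and_iff h1 h2]
  | B a ψ ih =>
    intro hn Γ hΓ
    have hψ : ψ.noK := hn
    constructor
    · intro hs
      by_contra hmem
      -- the set of beliefs of `a` together with ¬ψ is consistent
      set S : Set (Form Ag Atom) := insert (Form.neg ψ) {χ | Form.B a χ ∈ Γ} with hS
      have hSnoK : ∀ χ ∈ S, χ.noK := by
        rintro χ (rfl | hχ)
        · simp [hψ]
        · simpa using hΓ.noK _ hχ
      have hScon : Con owner p0 S := by
        refine ⟨hSnoK, ?_⟩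
        intro hPF
        have hbase : ∀ χ ∈ {χ | Form.B a χ ∈ Γ}, χ.noK := fun χ hχ => by
          simpa using hΓ.noK _ hχ
        have hd : PF owner {χ | Form.B a χ ∈ Γ} ((Form.neg ψ).imp (btF p0)) :=
          PF_deduction hbase (by simp [hψ]) hPF
        have hd2 : PF owner {χ | Form.B a χ ∈ Γ} ψ :=
          .mp (.thm (mkT (taut_dne2 p0 ψ) (by simp [hψ]))) hd
        obtain ⟨L, hL, hPF'⟩ := PF_fin hd2
        have hLnoK : ∀ χ ∈ L, χ.noK := fun χ hχ => hbase _ (hL _ hχ)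
        have hP : BProv owner false (impList L ψ) := PF_impList hLnoK hψ hPF'
        have hP2 : BProv owner false (Form.B a (impList L ψ)) := .nec a hP
        have hP3 : BProv owner false (impList (L.map (Form.B a)) (Form.B a ψ)) :=
          .mp (P_Kdist a hLnoK hψ) hP2
        -- peel off the hypotheses, all of which are in Γ
        have hmem' : Form.B a ψ ∈ Γ := by
          refine hΓ.closed (by simp [hψ]) ?_
          have : ∀ χ ∈ L.map (Form.B a), χ ∈ Γ := by
            intro χ hχ
            obtain ⟨y, hy, rfl⟩ := List.mem_map.1 hχ
            exact hL _ hy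
          exact PF_impList_elim (.thm hP3) this
        exact hmem hmem'
      obtain ⟨Δ, hΔsub, hΔ⟩ := lindenbaum hScon
      have hR : ∀ χ, Form.B a χ ∈ Γ → χ ∈ Δ := fun χ hχ =>
        hΔsub (Set.mem_insert_of_mem _ hχ)
      have hacc : Bacc (canM owner p0) a (edgeC owner Γ) (edgeC owner Δ) :=
        (Bacc_edgeC_iff hΓ hΔ).2 hR
      have hψΔ : ψ ∈ Δ := (ih hψ Δ hΔ).1 (hs _ ⟨Δ, hΔ, rfl⟩ hacc)
      exact hΔ.not_both hψΔ (hΔsub (Set.mem_insert _ _))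
    · intro hmem
      rintro e' ⟨Δ, hΔ, rfl⟩ hacc
      have hR := (Bacc_edgeC_iff hΓ hΔ).1 hacc
      exact (ih hψ Δ hΔ).2 (hR ψ hmem)
  | K a ψ ih =>
    intro hn
    exact absurd hn (noK_K a ψ)

end TruthLemma

/-- Extract an atom from a formula (witnessing nonemptiness of `Atom`). -/
def getAtom {Ag Atom : Type} : Form Ag Atom → Atom
  | .atom p => p
  | .neg ψ => getAtom ψ
  | .and ψ _ => getAtom ψ
  | .B _ ψ => getAtom ψ
  | .K _ ψ => getAtom ψ


/-- LocK45 is sound and complete with respect to the class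
`H^{SU}_n` of all simple and `n`-uniform hypergraph models, for formulas of the
doxastic fragment `L_B`. -/
theorem statement_13 {Ag Atom : Type} [Fintype Ag] [Nonempty Ag] [Countable Atom]
    (owner : Atom → Ag) (φ : Form Ag Atom) (hφ : φ.noK) :
    BProv owner false φ ↔
      ∀ (V : Type) (M : HModel Ag Atom V),
        M.IsModel owner → M.Simple → M.Uniform (Fintype.card Ag) →
        ∀ e ∈ M.E, hsat M e φ := by
  constructor
  · intro h V M hM _ _ e he
    exact soundness h V M hM e he
  · intro hval
    by_contra hnp
    set p0 : Atom := getAtom φ with hp0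
    have hcon : Con owner p0 {Form.neg φ} := by
      refine ⟨?_, ?_⟩
      · intro ψ hψ
        rw [Set.mem_singleton_iff] at hψ
        subst hψ
        simpa using hφ
      · intro hPF
        have h0 : PF owner (insert (Form.neg φ) (∅ : Set (Form Ag Atom))) (btF p0) := by
          refine PF_mono ?_ hPF
          intro x hx
          rw [Set.mem_singleton_iff] at hx
          simp [hx]
        have h1 : PF owner ∅ ((Form.neg φ).imp (btF p0)) :=
          PF_deduction (by simp) (by simpa using hφ) h0
        have h2 := PF_empty h1
        exact hnp (.mp (mkT (taut_dne2 p0 φ) (by simp [hφ])) h2)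
    obtain ⟨Γ0, hsub, hΓ0⟩ := lindenbaum hcon
    have hneg : Form.neg φ ∈ Γ0 := hsub (Set.mem_singleton _)
    have hsat0 := hval _ (canM owner p0) (canM_isModel ⟨Γ0, hΓ0⟩) canM_simple canM_uniform
      (edgeC owner Γ0) ⟨Γ0, hΓ0, rfl⟩
    have hφΓ := (truth_lemma φ hφ Γ0 hΓ0).1 hsat0
    exact hΓ0.not_both hφΓ hneg

end DoxHG
end

section
/- Let M be a local doxastic Kripke model and let σ(M) be the hypergraph model associated with M. (i) If M belongs to K^{TE}_n (M is local, proper, transitive and Euclidean), then σ(M) is a simple and n-uniform hypergraph model. (ii) If M belongs to K^{STE}_n (M is local, proper, serial, transitive and Euclidean), then σ(M) is a simple, n-uniform and tail-complete hypergraph model. -/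
namespace DoxHG

section SigmaConv

variable {Ag Atom W : Type}

/-- The vertex `[x_u^a]`: the equivalence class of `x_u^a`, represented
concretely as the color tag `a` together with the `E(B_a)`-class of `u`. -/
def kcls (M : KModel Ag Atom W) (a : Ag) (u : W) : Ag × Set W :=
  (a, {v | Relation.EqvGen (M.B a) u v})

/-- The hyperedge `e_u = (X_u, Y_u)` associated with a world `u`. -/
def kedge (M : KModel Ag Atom W) (u : W) : Set (Ag × Set W) × Set (Ag × Set W) :=
  ({x | ∃ a : Ag, M.B a u u ∧ x = kcls M a u},
   {x | ∃ a : Ag, ¬ M.B a u u ∧ x = kcls M a u})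

/-- The hypergraph model `σ(M)` associated with a (local) doxastic Kripke model `M`. -/
def sigmaHM (owner : Atom → Ag) (M : KModel Ag Atom W) : HModel Ag Atom (Ag × Set W) where
  Vset := {x | ∃ (a : Ag) (u : W), x = kcls M a u}
  E := {e | ∃ u : W, e = kedge M u}
  χ := Prod.fst
  ℓ := fun x => {p : Atom | owner p = x.1 ∧ ∃ u ∈ x.2, p ∈ M.V u}

end SigmaConv

end DoxHG

namespace DoxHG

section Aux

variable {Ag Atom W : Type}

lemma kcls_eq_iff (M : KModel Ag Atom W) (a b : Ag) (u v : W) :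
    kcls M a u = kcls M b v ↔ a = b ∧ Relation.EqvGen (M.B a) u v := by
  constructor
  · intro h
    have h1 : a = b := congrArg Prod.fst h
    have h2 : ({w | Relation.EqvGen (M.B a) u w} : Set W)
        = {w | Relation.EqvGen (M.B b) v w} := congrArg Prod.snd h
    subst h1
    refine ⟨rfl, ?_⟩
    have hv : v ∈ {w | Relation.EqvGen (M.B a) v w} := Relation.EqvGen.refl v
    rw [← h2] at hv
    exact hv
  · rintro ⟨rfl, h⟩
    unfold kcls
    refine Prod.ext rfl ?_
    ext w
    simp only [Set.mem_setOf_eq]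
    constructor
    · intro hw; exact (h.symm).trans _ _ _ hw
    · intro hw; exact h.trans _ _ _ hw

lemma ebar_kedge (M : KModel Ag Atom W) (u : W) :
    ebar (kedge M u) = Set.range (fun a => kcls M a u) := by
  ext x
  simp only [ebar, kedge, Set.mem_union, Set.mem_setOf_eq, Set.mem_range]
  constructor
  · rintro (⟨a, _, h⟩ | ⟨a, _, h⟩) <;> exact ⟨a, h.symm⟩
  · rintro ⟨a, h⟩
    by_cases hb : M.B a u u
    · exact Or.inl ⟨a, hb, h.symm⟩
    · exact Or.inr ⟨a, hb, h.symm⟩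

lemma kcls_inj (M : KModel Ag Atom W) (u : W) :
    Function.Injective (fun a => kcls M a u) := by
  intro a b h
  exact ((kcls_eq_iff M a b u u).1 h).1

end Aux

/-- Let `M` be a local doxastic Kripke model.
(i) If `M ∈ K^{TE}_n` (local, proper, transitive, Euclidean), then `σ(M)` is a
simple and `n`-uniform hypergraph model.
(ii) If `M ∈ K^{STE}_n` (local, proper, serial, transitive, Euclidean), then
`σ(M)` is a simple, `n`-uniform and tail-complete hypergraph model. -/
theorem statement_16 {Ag Atom W : Type} [Fintype Ag] [Nonempty Ag] [Countable Atom] [Nonempty W]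
    (owner : Atom → Ag) (M : KModel Ag Atom W) (hLoc : M.Local owner) :
    ((M.Proper → M.Transit → M.Eucl →
        (sigmaHM owner M).IsModel owner ∧ (sigmaHM owner M).Simple ∧
          (sigmaHM owner M).Uniform (Fintype.card Ag)) ∧
     (M.Proper → M.Serial → M.Transit → M.Eucl →
        (sigmaHM owner M).IsModel owner ∧ (sigmaHM owner M).Simple ∧
          (sigmaHM owner M).Uniform (Fintype.card Ag) ∧
          (sigmaHM owner M).TailComplete)) := by
  have hModel : (sigmaHM owner M).IsModel owner := by
    refine ⟨⟨?_, ?_⟩, ?_, ?_⟩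
    · obtain ⟨a⟩ := ‹Nonempty Ag›; obtain ⟨u⟩ := ‹Nonempty W›
      exact ⟨kcls M a u, a, u, rfl⟩
    · rintro e ⟨u, rfl⟩
      have hT : (kedge M u).1 ⊆ Set.range (fun a => kcls M a u) := by
        rintro x ⟨a, _, rfl⟩; exact ⟨a, rfl⟩
      have hH : (kedge M u).2 ⊆ Set.range (fun a => kcls M a u) := by
        rintro x ⟨a, _, rfl⟩; exact ⟨a, rfl⟩
      refine ⟨?_, ?_, ?_, ?_, ?_⟩
      · rintro x ⟨a, _, rfl⟩; exact ⟨a, u, rfl⟩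
      · rintro x ⟨a, _, rfl⟩; exact ⟨a, u, rfl⟩
      · exact (Set.finite_range _).subset hT
      · exact (Set.finite_range _).subset hH
      · rw [Set.disjoint_left]
        rintro x ⟨a, ha, rfl⟩ ⟨b, hb, hab⟩
        have : a = b := ((kcls_eq_iff M a b u u).1 hab).1
        subst this
        exact hb ha
    · rintro e ⟨u, rfl⟩ x hx y hy hxy
      rw [ebar_kedge] at hx hy
      obtain ⟨a, rfl⟩ := hx
      obtain ⟨b, rfl⟩ := hy
      have : a = b := hxy
      subst this; rfl
    · rintro x _ p hp
      exact hp.1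
  have hSimple : M.Proper → (sigmaHM owner M).Simple := by
    intro hProp
    rintro e₁ ⟨u, rfl⟩ e₂ ⟨v, rfl⟩ hne hsub
    rw [ebar_kedge, ebar_kedge] at hsub
    have heq : u = v := by
      by_contra huv
      obtain ⟨a, ha⟩ := hProp u v huv
      obtain ⟨b, hb⟩ := hsub ⟨a, rfl⟩
      obtain ⟨hab, h⟩ := (kcls_eq_iff M a b u v).1 hb.symm
      exact ha h
    exact hne (heq ▸ rfl)
  have hUnif : (sigmaHM owner M).Uniform (Fintype.card Ag) := by
    rintro e ⟨u, rfl⟩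
    rw [ebar_kedge, ← Set.image_univ,
      Set.ncard_image_of_injective _ (kcls_inj M u), Set.ncard_univ,
      Nat.card_eq_fintype_card]
  refine ⟨fun hProp _ _ => ⟨hModel, hSimple hProp, hUnif⟩,
    fun hProp hSer _ hEuc => ⟨hModel, hSimple hProp, hUnif, ?_⟩⟩
  rintro x ⟨a, u, rfl⟩
  obtain ⟨v, hv⟩ := hSer a u
  refine ⟨kedge M v, ⟨v, rfl⟩, a, hEuc a u v v hv hv, ?_⟩
  exact (kcls_eq_iff M a a u v).2 ⟨rfl, Relation.EqvGen.rel _ _ hv⟩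

end DoxHG
end
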